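/- arXiv:2102.01334 — 3 statements merged into one kernel-verified Lean document; each statement's English description precedes it below -/
import Mathlib

section
/- Let V be a finite-dimensional real normed vector space and let 𝓗₀ ⊆ 𝓗₁ be two locally finite collections of affine hyperplanes in V (locally finite meaning every point of V has a neighborhood meeting only finitely many members of the collection). Let C be a connected component of V \ ⋃_{H ∈ 𝓗₀} H. Then the closure of C equals the union of the closures of those connected components of V \ ⋃_{H ∈ 𝓗₁} H that are contained in C. -/
/-!
The inclusion `⊇` is immediate. For `⊆`: hyperplanes in a finite-dimensional space are closed
with empty interior, so by local finiteness `⋃ 𝓗₁` is closed with empty interior and the open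
set `C` lies in the closure of `C \ ⋃ 𝓗₁`, which is the union of the components of the
complement of `⋃ 𝓗₁` contained in `C`. These components form a locally finite family: a small
ball meets only finitely many hyperplanes of `𝓗₁`, and the ball minus them is covered by the
finitely many convex cells cut out by a choice of side of each one, each cell lying in a single
component. The closure of a locally finite union is the union of the closures.
-/

open Set Topology

section Topology

variable {X : Type*} [TopologicalSpace X]

theorem locallyFinite_subtype_val_iff {𝓢 : Set (Set X)} :
    LocallyFinite (Subtype.val : 𝓢 → Set X) ↔
      ∀ x, ∃ U ∈ 𝓝 x, {s ∈ 𝓢 | (s ∩ U).Nonempty}.Finite := by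
  refine forall_congr' fun x => exists_congr fun U => and_congr_right fun _ => ?_
  have : Subtype.val '' {s : 𝓢 | ((s : Set X) ∩ U).Nonempty} = {s ∈ 𝓢 | (s ∩ U).Nonempty} := by
    ext s; simp [and_comm]
  rw [← this, finite_image_iff Subtype.val_injective.injOn]

theorem closure_sUnion_of_locallyFinite {𝓢 𝓣 : Set (Set X)}
    (h𝓣 : LocallyFinite (Subtype.val : 𝓣 → Set X)) (h𝓢 : 𝓢 ⊆ 𝓣) :
    closure (⋃₀ 𝓢) = ⋃ s ∈ 𝓢, closure s := by
  rw [sUnion_eq_iUnion, biUnion_eq_iUnion]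
  exact (h𝓣.comp_injective (inclusion_injective h𝓢)).closure_iUnion

theorem Set.Finite.interior_biUnion_eq_empty {ι : Type*} {f : ι → Set X} {I : Set ι}
    (hI : I.Finite) (hc : ∀ i, IsClosed (f i)) (he : ∀ i, interior (f i) = ∅) :
    interior (⋃ i ∈ I, f i) = ∅ := by
  induction I, hI using Set.Finite.induction_on with
  | empty => simp
  | @insert a I _ _ ih =>
    rw [biUnion_insert, interior_union_isClosed_of_interior_empty (hc a) ih, he a]

theorem LocallyFinite.interior_iUnion_eq_empty {ι : Type*} {f : ι → Set X}
    (hf : LocallyFinite f) (hc : ∀ i, IsClosed (f i)) (he : ∀ i, interior (f i) = ∅) :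
    interior (⋃ i, f i) = ∅ := by
  refine eq_empty_of_forall_notMem fun x hx => ?_
  obtain ⟨U, hU, hfin⟩ := hf x
  have hsub : interior U ∩ interior (⋃ i, f i) ⊆ ⋃ i ∈ {i | (f i ∩ U).Nonempty}, f i := by
    rintro y ⟨hyU, hy⟩
    obtain ⟨i, hi⟩ := mem_iUnion.1 (interior_subset hy)
    exact mem_biUnion ⟨y, hi, interior_subset hyU⟩ hi
  have := (isOpen_interior.inter isOpen_interior).subset_interior_iff.2 hsub
  rw [hfin.interior_biUnion_eq_empty hc he] at this
  exact this ⟨mem_interior_iff_mem_nhds.2 hU, hx⟩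

def connectedComponentsIn (s : Set X) : Set (Set X) :=
  {B | ∃ x ∈ s, B = connectedComponentIn s x}

theorem eq_connectedComponentIn_of_mem {s B : Set X} (hB : B ∈ connectedComponentsIn s)
    {y : X} (hy : y ∈ B) : B = connectedComponentIn s y := by
  obtain ⟨x, -, rfl⟩ := hB
  exact connectedComponentIn_eq hy

theorem IsPreconnected.subsingleton_connectedComponentsIn_meeting {s p : Set X}
    (hp : IsPreconnected p) (hps : p ⊆ s) :
    {B ∈ connectedComponentsIn s | (B ∩ p).Nonempty}.Subsingleton := by
  rintro B ⟨hB, y, hyB, hyp⟩ B' ⟨hB', y', hy'B', hy'p⟩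
  rw [eq_connectedComponentIn_of_mem hB hyB, eq_connectedComponentIn_of_mem hB' hy'B']
  exact connectedComponentIn_eq (hp.subset_connectedComponentIn hyp hps hy'p)

theorem finite_connectedComponentsIn_meeting_of_preconnected_cover {s W : Set X}
    {𝓟 : Set (Set X)} (h𝓟 : 𝓟.Finite) (hconn : ∀ p ∈ 𝓟, IsPreconnected p ∧ p ⊆ s)
    (hcover : s ∩ W ⊆ ⋃₀ 𝓟) :
    {B ∈ connectedComponentsIn s | (B ∩ W).Nonempty}.Finite := by
  refine (h𝓟.biUnion fun p hp =>
    ((hconn p hp).1.subsingleton_connectedComponentsIn_meeting (hconn p hp).2).finite).subset ?_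
  rintro B ⟨hB, y, hyB, hyW⟩
  have hys : y ∈ s := by
    rw [eq_connectedComponentIn_of_mem hB hyB] at hyB
    exact connectedComponentIn_subset _ _ hyB
  obtain ⟨p, hp, hyp⟩ := hcover ⟨hys, hyW⟩
  exact mem_biUnion hp ⟨hB, y, hyB, hyp⟩

end Topology

theorem sdiff_sUnion_sep_inter_nonempty {α : Type*} (W : Set α) (𝓗 : Set (Set α)) :
    W \ ⋃₀ {H ∈ 𝓗 | (H ∩ W).Nonempty} = W \ ⋃₀ 𝓗 :=
  (sdiff_subset_sdiff_right (sUnion_mono (sep_subset _ _))).antisymm' fun y ⟨hyW, hy⟩ =>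
    ⟨hyW, fun ⟨H, hH, hyH⟩ => hy ⟨H, ⟨hH, y, hyH, hyW⟩, hyH⟩⟩

theorem Set.Finite.exists_convex_cover_sdiff_sUnion {𝕜 E : Type*} [Semiring 𝕜] [PartialOrder 𝕜]
    [AddCommMonoid E] [Module 𝕜 E] {W : Set E} (hW : Convex 𝕜 W) {T : Set (Set E)}
    (hT : T.Finite) (hcompl : ∀ H ∈ T, ∃ P N : Set E, Convex 𝕜 P ∧ Convex 𝕜 N ∧ Hᶜ = P ∪ N) :
    ∃ 𝓟 : Set (Set E), 𝓟.Finite ∧ (∀ p ∈ 𝓟, Convex 𝕜 p ∧ p ⊆ W \ ⋃₀ T) ∧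
      W \ ⋃₀ T ⊆ ⋃₀ 𝓟 := by
  classical
  choose! P N hP hN hPN using hcompl
  have : Finite T := hT.to_subtype
  -- `σ` picks, for each `H ∈ T`, one of the two convex pieces of `Hᶜ`.
  let piece (σ : T → Bool) : Set E := W ∩ ⋂ H : T, if σ H then P H else N H
  refine ⟨range piece, finite_range piece, ?_, ?_⟩
  · rintro _ ⟨σ, rfl⟩
    refine ⟨hW.inter (convex_iInter fun H => ?_), fun y ⟨hyW, hy⟩ => ⟨hyW, ?_⟩⟩
    · split_ifs
      exacts [hP H H.2, hN H H.2]
    · rintro ⟨H, hH, hyH⟩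
      have hy' := mem_iInter.1 hy ⟨H, hH⟩
      have : y ∈ P H ∪ N H := by split_ifs at hy' <;> simp [hy']
      rw [← hPN H hH] at this
      exact this hyH
  · rintro y ⟨hyW, hy⟩
    refine ⟨piece fun H => decide (y ∈ P H), mem_range_self _, hyW, mem_iInter.2 fun H => ?_⟩
    have hyH : y ∈ (H : Set E)ᶜ := fun h => hy ⟨H, H.2, h⟩
    rw [hPN H H.2] at hyH
    by_cases h : y ∈ P H
    · simp [h]
    · simpa [h] using hyH.resolve_left h

theorem locallyFinite_connectedComponentsIn_compl_sUnion {E : Type*}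
    [SeminormedAddCommGroup E] [NormedSpace ℝ E] {𝓗 : Set (Set E)}
    (hlf : LocallyFinite (Subtype.val : 𝓗 → Set E))
    (hcompl : ∀ H ∈ 𝓗, ∃ P N : Set E, Convex ℝ P ∧ Convex ℝ N ∧ Hᶜ = P ∪ N) :
    LocallyFinite (Subtype.val : connectedComponentsIn (⋃₀ 𝓗)ᶜ → Set E) := by
  refine locallyFinite_subtype_val_iff.2 fun x => ?_
  obtain ⟨U, hU, hfin⟩ := locallyFinite_subtype_val_iff.1 hlf x
  obtain ⟨ε, hε, hball⟩ := Metric.mem_nhds_iff.1 hU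
  set T := {H ∈ 𝓗 | (H ∩ Metric.ball x ε).Nonempty}
  have hT : T.Finite :=
    hfin.subset fun H ⟨hH, hne⟩ => ⟨hH, hne.mono (inter_subset_inter_right _ hball)⟩
  have hsdiff : Metric.ball x ε \ ⋃₀ T = (⋃₀ 𝓗)ᶜ ∩ Metric.ball x ε := by
    rw [sdiff_sUnion_sep_inter_nonempty, sdiff_eq_compl_inter]
  obtain ⟨𝓟, h𝓟, hconv, hcover⟩ :=
    hT.exists_convex_cover_sdiff_sUnion (convex_ball x ε) fun H hH => hcompl H hH.1
  rw [hsdiff] at hconv hcover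
  exact ⟨_, Metric.ball_mem_nhds x hε, finite_connectedComponentsIn_meeting_of_preconnected_cover
    h𝓟 (fun p hp => ⟨(hconv p hp).1.isPreconnected, (hconv p hp).2.trans inter_subset_left⟩)
    hcover⟩

theorem LinearMap.interior_setOf_eq_eq_empty {V : Type*} [NormedAddCommGroup V]
    [NormedSpace ℝ V] [FiniteDimensional ℝ V] {f : V →ₗ[ℝ] ℝ} (hf : f ≠ 0) (c : ℝ) :
    interior {x | f x = c} = ∅ := by
  have hopen := f.isOpenMap_of_finiteDimensional (f.surjective_or_eq_zero.resolve_right hf)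
  have : f '' interior {x | f x = c} ⊆ interior {c} :=
    (hopen.image_interior_subset _).trans (interior_mono (image_subset_iff.2 fun _ hx => hx))
  rw [interior_singleton, subset_empty_iff, image_eq_empty] at this
  exact this

theorem closure_component_eq_union_closure_components_general
    {V : Type*} [NormedAddCommGroup V] [NormedSpace ℝ V] [FiniteDimensional ℝ V]
    (𝓗₀ 𝓗₁ : Set (Set V)) (hsub : 𝓗₀ ⊆ 𝓗₁)
    (hhyperplane : ∀ H ∈ 𝓗₁, ∃ (f : V →ₗ[ℝ] ℝ) (c : ℝ), f ≠ 0 ∧ H = {x | f x = c})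
    (hlf₁ : ∀ x : V, ∃ U ∈ nhds x, {H ∈ 𝓗₁ | (H ∩ U).Nonempty}.Finite)
    (C : Set V) (hC : ∃ x ∈ (⋃₀ 𝓗₀)ᶜ, C = connectedComponentIn (⋃₀ 𝓗₀)ᶜ x) :
    closure C =
      ⋃ B ∈ {B : Set V |
        (∃ x ∈ (⋃₀ 𝓗₁)ᶜ, B = connectedComponentIn (⋃₀ 𝓗₁)ᶜ x) ∧ B ⊆ C}, closure B := by
  obtain ⟨x₀, -, rfl⟩ := hC
  have hlf : LocallyFinite (Subtype.val : 𝓗₁ → Set V) := locallyFinite_subtype_val_iff.2 hlf₁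
  have hclosed (H : 𝓗₁) : IsClosed (H : Set V) := by
    obtain ⟨f, c, -, hH⟩ := hhyperplane H H.2
    exact hH ▸ isClosed_eq f.continuous_of_finiteDimensional continuous_const
  have hcompl : ∀ H ∈ 𝓗₁, ∃ P N : Set V, Convex ℝ P ∧ Convex ℝ N ∧ Hᶜ = P ∪ N := by
    rintro H hH
    obtain ⟨f, c, -, rfl⟩ := hhyperplane H hH
    exact ⟨{x | f x < c}, {x | c < f x}, convex_halfSpace_lt f.isLinear c,
      convex_halfSpace_gt f.isLinear c, by ext; simp [lt_or_lt_iff_ne]⟩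
  have hdense : Dense (⋃₀ 𝓗₁)ᶜ := by
    refine interior_eq_empty_iff_dense_compl.1 ?_
    rw [sUnion_eq_iUnion]
    refine hlf.interior_iUnion_eq_empty hclosed fun H => ?_
    obtain ⟨f, c, hf, hH⟩ := hhyperplane H H.2
    exact hH ▸ f.interior_setOf_eq_eq_empty hf c
  have hopen : IsOpen (connectedComponentIn (⋃₀ 𝓗₀)ᶜ x₀) := by
    refine IsOpen.connectedComponentIn (isOpen_compl_iff.2 ?_)
    rw [sUnion_eq_iUnion]
    exact (hlf.comp_injective (inclusion_injective hsub)).isClosed_iUnion fun H => hclosed _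
  have hcover : connectedComponentIn (⋃₀ 𝓗₀)ᶜ x₀ ∩ (⋃₀ 𝓗₁)ᶜ ⊆
      ⋃₀ {B | B ∈ connectedComponentsIn (⋃₀ 𝓗₁)ᶜ ∧ B ⊆ connectedComponentIn (⋃₀ 𝓗₀)ᶜ x₀} := by
    rintro y ⟨hyC, hy⟩
    refine ⟨connectedComponentIn (⋃₀ 𝓗₁)ᶜ y, ⟨⟨y, hy, rfl⟩, ?_⟩, mem_connectedComponentIn hy⟩
    rw [connectedComponentIn_eq hyC]
    exact connectedComponentIn_mono _ (compl_subset_compl.2 (sUnion_mono hsub))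
  refine subset_antisymm ?_ (iUnion₂_subset fun B hB => closure_mono hB.2)
  calc closure (connectedComponentIn (⋃₀ 𝓗₀)ᶜ x₀)
      ⊆ closure (connectedComponentIn (⋃₀ 𝓗₀)ᶜ x₀ ∩ (⋃₀ 𝓗₁)ᶜ) :=
        closure_minimal (hdense.open_subset_closure_inter hopen) isClosed_closure
    _ ⊆ _ := closure_mono hcover
    _ = _ := closure_sUnion_of_locallyFinite
        (locallyFinite_connectedComponentsIn_compl_sUnion hlf hcompl) fun _ hB => hB.1

/-- Let `V` be a finite-dimensional real normed vector space and let
`𝓗₀ ⊆ 𝓗₁` be two locally finite collections of affine hyperplanes in `V` (an affine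
hyperplane is a level set `{x | f x = c}` of a nonzero linear functional `f`; local
finiteness means every point has a neighbourhood meeting only finitely many members).
If `C` is a connected component of `V \ ⋃ 𝓗₀`, then the closure of `C` equals the union
of the closures of those connected components of `V \ ⋃ 𝓗₁` that are contained in `C`. -/
theorem closure_component_eq_union_closure_components
    {V : Type*} [NormedAddCommGroup V] [NormedSpace ℝ V] [FiniteDimensional ℝ V]
    (𝓗₀ 𝓗₁ : Set (Set V)) (hsub : 𝓗₀ ⊆ 𝓗₁)
    (hhyperplane : ∀ H ∈ 𝓗₁, ∃ (f : V →ₗ[ℝ] ℝ) (c : ℝ), f ≠ 0 ∧ H = {x | f x = c})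
    (hlf₀ : ∀ x : V, ∃ U ∈ nhds x, {H ∈ 𝓗₀ | (H ∩ U).Nonempty}.Finite)
    (hlf₁ : ∀ x : V, ∃ U ∈ nhds x, {H ∈ 𝓗₁ | (H ∩ U).Nonempty}.Finite)
    (C : Set V) (hC : ∃ x ∈ (⋃₀ 𝓗₀)ᶜ, C = connectedComponentIn (⋃₀ 𝓗₀)ᶜ x) :
    closure C =
      ⋃ B ∈ {B : Set V |
        (∃ x ∈ (⋃₀ 𝓗₁)ᶜ, B = connectedComponentIn (⋃₀ 𝓗₁)ᶜ x) ∧ B ⊆ C}, closure B :=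
  closure_component_eq_union_closure_components_general 𝓗₀ 𝓗₁ hsub hhyperplane hlf₁ C hC
end

section
/- Let Φ be a finite, reduced, crystallographic root system spanning a finite-dimensional real inner product space V, with fixed base Δ = {α₁,…,α_n}, fundamental Weyl chamber C = {x ∈ V : ⟨x, α_i∨⟩ > 0 for 1 ≤ i ≤ n}, Weyl group W̊, weight lattice P̊ = {x ∈ V : ⟨x, α∨⟩ ∈ ℤ for all α ∈ Φ}, set of dominant integral weights P̊⁺ = P̊ ∩ C̄, and highest root θ. Let M be the subgroup of (V,+) generated by {w(θ) : w ∈ W̊}, and set M⁺ = M ∩ C̄. Then for every positive integer ℓ and every λ ∈ P̊⁺ there exist μ ∈ M⁺ and w ∈ W̊ such that w(ℓμ − λ) ∈ P̊⁺ and ⟨w(ℓμ − λ), θ∨⟩ ≤ ℓ. -/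
/-!
Minimise `‖ℓ • μ - λ‖` over `μ ∈ M`. Since `M` lies in the weight lattice, which meets every
ball in a finite set, minimisers exist and there are finitely many of them. As `λ` is dominant,
reflecting a minimiser in a simple root with which it pairs negatively does not increase the
distance, so the minimiser maximising the pairing with a strictly dominant vector is dominant.
Let `w` make `ν = w (ℓ • μ - λ)` dominant. If `⟨ν, θ∨⟩ > ℓ`, then `μ - w⁻¹ θ ∈ M` would
replace `ν` by the strictly shorter vector `ν - ℓ • θ`, contradicting minimality.
-/

open RealInnerProductSpace

section

variable {V : Type*} [NormedAddCommGroup V] [InnerProductSpace ℝ V]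

/-- `coroot 0 = 0`, as `2 / 0 = 0` in `ℝ`. -/
noncomputable def coroot (α : V) : V := (2 / ⟪α, α⟫) • α

theorem real_inner_coroot (x α : V) : ⟪x, coroot α⟫ = 2 * ⟪x, α⟫ / ⟪α, α⟫ := by
  rw [coroot, real_inner_smul_right]; ring

theorem inner_self_div_two_smul_coroot (α : V) : (⟪α, α⟫ / 2) • coroot α = α := by
  rcases eq_or_ne α 0 with rfl | hα
  · simp [coroot]
  · have : ⟪α, α⟫ ≠ 0 := inner_self_ne_zero.mpr hα
    rw [coroot, smul_smul, div_mul_div_comm, mul_comm, div_self (by positivity), one_smul]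

theorem real_inner_coroot_pos_iff {x α : V} : 0 < ⟪x, coroot α⟫ ↔ 0 < ⟪x, α⟫ := by
  rcases eq_or_ne α 0 with rfl | hα
  · simp [coroot]
  · rw [coroot, real_inner_smul_right, mul_pos_iff_of_pos_left]
    exact div_pos two_pos (real_inner_self_pos.mpr hα)

theorem real_inner_coroot_nonneg_iff {x α : V} : 0 ≤ ⟪x, coroot α⟫ ↔ 0 ≤ ⟪x, α⟫ := by
  rcases eq_or_ne α 0 with rfl | hα
  · simp [coroot]
  · rw [coroot, real_inner_smul_right, mul_nonneg_iff_of_pos_left]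
    exact div_pos two_pos (real_inner_self_pos.mpr hα)

theorem reflection_orthogonal_singleton_apply (α x : V) :
    (ℝ ∙ α)ᗮ.reflection x = x - ⟪x, coroot α⟫ • α := by
  rw [Submodule.reflection_orthogonal_apply, Submodule.reflection_singleton_apply,
    real_inner_coroot, real_inner_self_eq_norm_sq, real_inner_comm]
  simp only [RCLike.ofReal_real_eq_id, id]
  module

theorem real_inner_reflection_orthogonal_singleton (α x v : V) :
    ⟪(ℝ ∙ α)ᗮ.reflection x, v⟫ = ⟪x, v⟫ - ⟪x, coroot α⟫ * ⟪v, α⟫ := by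
  rw [reflection_orthogonal_singleton_apply, inner_sub_left, real_inner_smul_left,
    real_inner_comm v α]

theorem real_inner_le_inner_reflection {α x v : V} (hx : ⟪x, coroot α⟫ ≤ 0)
    (hv : 0 ≤ ⟪v, coroot α⟫) : ⟪x, v⟫ ≤ ⟪(ℝ ∙ α)ᗮ.reflection x, v⟫ := by
  rw [real_inner_reflection_orthogonal_singleton]
  nlinarith [real_inner_coroot_nonneg_iff.mp hv]

theorem real_inner_lt_inner_reflection {α x v : V} (hx : ⟪x, coroot α⟫ < 0)
    (hv : 0 < ⟪v, coroot α⟫) : ⟪x, v⟫ < ⟪(ℝ ∙ α)ᗮ.reflection x, v⟫ := by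
  rw [real_inner_reflection_orthogonal_singleton]
  nlinarith [real_inner_coroot_pos_iff.mp hv]

theorem norm_sub_smul_lt_of_lt_inner_coroot {θ v : V} {t : ℝ} (ht : 0 < t)
    (h : t < ⟪v, coroot θ⟫) : ‖v - t • θ‖ < ‖v‖ := by
  rcases eq_or_ne θ 0 with rfl | hθ
  · simp [coroot] at h; linarith
  rw [real_inner_coroot, lt_div_iff₀ (real_inner_self_pos.mpr hθ)] at h
  rw [← sq_lt_sq₀ (norm_nonneg _) (norm_nonneg _), norm_sub_sq_real, norm_smul,
    real_inner_smul_right, mul_pow, Real.norm_eq_abs, sq_abs, ← real_inner_self_eq_norm_sq θ]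
  nlinarith

theorem norm_smul_sub_le_of_inner_le {y z v : V} {t : ℝ} (ht : 0 ≤ t) (hn : ‖y‖ = ‖z‖)
    (hi : ⟪z, v⟫ ≤ ⟪y, v⟫) : ‖t • y - v‖ ≤ ‖t • z - v‖ := by
  rw [← sq_le_sq₀ (norm_nonneg _) (norm_nonneg _), norm_sub_sq_real, norm_sub_sq_real,
    norm_smul, norm_smul, hn, real_inner_smul_left, real_inner_smul_left]
  nlinarith

theorem norm_le_two_mul_of_norm_smul_sub_le {t : ℝ} (ht : 1 ≤ t) {μ v : V}
    (h : ‖t • μ - v‖ ≤ ‖v‖) : ‖μ‖ ≤ 2 * ‖v‖ := by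
  have := norm_sub_norm_le (t • μ) v
  rw [norm_smul, Real.norm_of_nonneg (by linarith)] at this
  nlinarith [norm_nonneg μ]

theorem ext_inner_right_of_span_eq_top {S : Set V} (hS : Submodule.span ℝ S = ⊤) {x y : V}
    (h : ∀ α ∈ S, ⟪x, α⟫ = ⟪y, α⟫) : x = y :=
  ext_inner_right ℝ fun u =>
    LinearMap.congr_fun (LinearMap.ext_on (f := innerₛₗ ℝ x) (g := innerₛₗ ℝ y) hS h) u

theorem finite_setOf_forall_inner_int_norm_le {S : Set V} (hS : S.Finite)
    (hspan : Submodule.span ℝ S = ⊤) (R : ℝ) :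
    {x : V | (∀ α ∈ S, ∃ k : ℤ, ⟪x, α⟫ = k) ∧ ‖x‖ ≤ R}.Finite := by
  have : Finite S := hS
  let g : V → S → ℝ := fun x α => ⟪x, α⟫
  have hg : g.Injective := fun x y hxy =>
    ext_inner_right_of_span_eq_top hspan fun α hα => congr_fun hxy ⟨α, hα⟩
  let N : S → ℤ := fun α => ⌈R * ‖(α : V)‖⌉
  have hbox : (Set.univ.pi fun α => ((↑) : ℤ → ℝ) '' Set.Icc (-N α) (N α)).Finite :=
    Set.Finite.pi fun α => (Set.finite_Icc _ _).image _
  refine (hbox.preimage hg.injOn).subset ?_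
  rintro x ⟨hint, hx⟩ α -
  obtain ⟨k, hk⟩ := hint α α.2
  have hkR : |(k : ℝ)| ≤ R * ‖(α : V)‖ :=
    hk ▸ (abs_real_inner_le_norm x α).trans (by gcongr)
  have hkN : |k| ≤ N α := by exact_mod_cast hkR.trans (Int.le_ceil _)
  exact ⟨k, abs_le.mp hkN, hk.symm⟩

theorem closure_setOf_forall_inner_pos {ι : Type*} (v : ι → V) {d : V}
    (hd : ∀ i, 0 < ⟪d, v i⟫) :
    closure {x : V | ∀ i, 0 < ⟪x, v i⟫} = {x | ∀ i, 0 ≤ ⟪x, v i⟫} := by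
  apply subset_antisymm
  · refine closure_minimal (fun x hx i => (hx i).le) ?_
    simp only [Set.ofPred_forall]
    exact isClosed_iInter fun i => isClosed_le continuous_const (by fun_prop)
  · intro x hx
    refine closure_mono ?_ (segment_subset_closure_openSegment (left_mem_segment ℝ x (x + d)))
    rintro _ ⟨a, b, ha, hb, hab, rfl⟩ i
    have : a • x + b • (x + d) = x + b • d := by
      rw [smul_add, ← add_assoc, ← add_smul, hab, one_smul]
    rw [this, inner_add_left, real_inner_smul_left]
    nlinarith [hx i, hd i]

theorem LinearIndependent.exists_forall_inner_eq_one {ι : Type*} [Fintype ι] {v : ι → V}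
    (hv : LinearIndependent ℝ v) : ∃ d : V, ∀ i, ⟪d, v i⟫ = 1 := by
  let U := Submodule.span ℝ (Set.range v)
  have : FiniteDimensional ℝ U := .span_of_finite ℝ (Set.finite_range v)
  have : CompleteSpace U := FiniteDimensional.complete ℝ U
  let b : Module.Basis ι ℝ U := .span hv
  let f : U →L[ℝ] ℝ := LinearMap.toContinuousLinearMap (∑ i, b.coord i)
  refine ⟨(InnerProductSpace.toDual ℝ U).symm f, fun i => ?_⟩
  have hbi : ((b i : U) : V) = v i := congrArg Subtype.val (Module.Basis.span_apply hv i)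
  rw [← hbi, ← Submodule.coe_inner, InnerProductSpace.toDual_symm_apply]
  simp [f]

def weightLattice (Φ : Set V) : AddSubgroup V where
  carrier := {x | ∀ α ∈ Φ, ∃ k : ℤ, ⟪x, coroot α⟫ = k}
  zero_mem' α _ := ⟨0, by simp⟩
  add_mem' hx hy α hα := by
    obtain ⟨k, hk⟩ := hx α hα
    obtain ⟨m, hm⟩ := hy α hα
    exact ⟨k + m, by rw [inner_add_left, hk, hm, Int.cast_add]⟩
  neg_mem' hx α hα := by
    obtain ⟨k, hk⟩ := hx α hα
    exact ⟨-k, by rw [inner_neg_left, hk, Int.cast_neg]⟩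

def weylGroup (Φ : Set V) : Subgroup (V ≃ₗᵢ[ℝ] V) :=
  Subgroup.closure {g | ∃ α ∈ Φ, g = (ℝ ∙ α)ᗮ.reflection}

def orbitLattice (W : Subgroup (V ≃ₗᵢ[ℝ] V)) (θ : V) : AddSubgroup V :=
  AddSubgroup.closure {v | ∃ w ∈ W, v = w θ}

variable {Φ : Set V}

theorem finite_setOf_mem_weightLattice_norm_le (hΦ : Φ.Finite)
    (hspan : Submodule.span ℝ Φ = ⊤) (R : ℝ) :
    {x | x ∈ weightLattice Φ ∧ ‖x‖ ≤ R}.Finite := by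
  have hspan' : Submodule.span ℝ (coroot '' Φ) = ⊤ := by
    refine eq_top_iff.mpr (hspan ▸ Submodule.span_le.mpr fun α hα => ?_)
    rw [← inner_self_div_two_smul_coroot α]
    exact Submodule.smul_mem _ _ (Submodule.subset_span (Set.mem_image_of_mem _ hα))
  refine (finite_setOf_forall_inner_int_norm_le (hΦ.image coroot) hspan' R).subset ?_
  rintro x ⟨hx, hxR⟩
  exact ⟨Set.forall_mem_image.mpr hx, hxR⟩

theorem reflection_mem_weylGroup {α : V} (hα : α ∈ Φ) : (ℝ ∙ α)ᗮ.reflection ∈ weylGroup Φ :=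
  Subgroup.subset_closure ⟨α, hα, rfl⟩

theorem reflection_mem_weightLattice (hΦ : Φ ⊆ weightLattice Φ) {α x : V} (hα : α ∈ Φ)
    (hx : x ∈ weightLattice Φ) : (ℝ ∙ α)ᗮ.reflection x ∈ weightLattice Φ := by
  obtain ⟨k, hk⟩ := hx α hα
  rw [reflection_orthogonal_singleton_apply, hk, Int.cast_smul_eq_zsmul]
  exact sub_mem hx (zsmul_mem (hΦ hα) k)

theorem mapsTo_weightLattice_of_mem_weylGroup (hΦ : Φ ⊆ weightLattice Φ) {w : V ≃ₗᵢ[ℝ] V}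
    (hw : w ∈ weylGroup Φ) : Set.MapsTo w (weightLattice Φ) (weightLattice Φ) := by
  induction hw using Subgroup.closure_induction'' with
  | mem g hg =>
    obtain ⟨α, hα, rfl⟩ := hg
    exact fun x hx => reflection_mem_weightLattice hΦ hα hx
  | inv_mem g hg =>
    obtain ⟨α, hα, rfl⟩ := hg
    rw [Submodule.reflection_inv]
    exact fun x hx => reflection_mem_weightLattice hΦ hα hx
  | one => exact Set.mapsTo_id _
  | mul g h _ _ hg hh => exact hg.comp hh

section orbitLattice

variable {W : Subgroup (V ≃ₗᵢ[ℝ] V)} {θ : V}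

theorem apply_mem_orbitLattice {w : V ≃ₗᵢ[ℝ] V} (hw : w ∈ W) : w θ ∈ orbitLattice W θ :=
  AddSubgroup.subset_closure ⟨w, hw, rfl⟩

theorem map_mem_orbitLattice {w : V ≃ₗᵢ[ℝ] V} (hw : w ∈ W) {μ : V}
    (hμ : μ ∈ orbitLattice W θ) : w μ ∈ orbitLattice W θ := by
  induction hμ using AddSubgroup.closure_induction with
  | mem v hv =>
    obtain ⟨w', hw', rfl⟩ := hv
    exact apply_mem_orbitLattice (mul_mem hw hw')
  | zero => simp
  | add x y _ _ hx hy => simpa using add_mem hx hy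
  | neg x _ hx => simpa using neg_mem hx

theorem orbitLattice_le_weightLattice (hΦ : Φ ⊆ weightLattice Φ) (hθ : θ ∈ Φ) :
    orbitLattice (weylGroup Φ) θ ≤ weightLattice Φ :=
  (AddSubgroup.closure_le _).mpr fun _ ⟨_, hw, hv⟩ =>
    hv ▸ mapsTo_weightLattice_of_mem_weylGroup hΦ hw (hΦ hθ)

end orbitLattice

variable {ι : Type*} {Δ : ι → V} {d : V}

theorem Set.Finite.exists_mem_forall_inner_coroot_nonneg (hd : ∀ i, 0 < ⟪d, coroot (Δ i)⟫)
    {S : Set V} (hS : S.Finite) (hne : S.Nonempty)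
    (hrefl : ∀ z ∈ S, ∀ i, ⟪z, coroot (Δ i)⟫ < 0 → (ℝ ∙ Δ i)ᗮ.reflection z ∈ S) :
    ∃ z ∈ S, ∀ i, 0 ≤ ⟪z, coroot (Δ i)⟫ := by
  obtain ⟨z, hz, hmax⟩ := S.exists_max_image (⟪·, d⟫) hS hne
  refine ⟨z, hz, fun i => not_lt.mp fun hneg => ?_⟩
  exact (real_inner_lt_inner_reflection hneg (hd i)).not_ge (hmax _ (hrefl z hz i hneg))

theorem exists_mem_weylGroup_forall_inner_coroot_nonneg (hΦ : Φ.Finite)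
    (hspan : Submodule.span ℝ Φ = ⊤) (hcrys : Φ ⊆ weightLattice Φ) (hΔ : ∀ i, Δ i ∈ Φ)
    (hd : ∀ i, 0 < ⟪d, coroot (Δ i)⟫) {x : V} (hx : x ∈ weightLattice Φ) :
    ∃ w ∈ weylGroup Φ, ∀ i, 0 ≤ ⟪w x, coroot (Δ i)⟫ := by
  have horbit : ((fun w : V ≃ₗᵢ[ℝ] V => w x) '' weylGroup Φ).Finite := by
    refine (finite_setOf_mem_weightLattice_norm_le hΦ hspan ‖x‖).subset ?_
    rintro _ ⟨w, hw, rfl⟩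
    exact ⟨mapsTo_weightLattice_of_mem_weylGroup hcrys hw hx, (w.norm_map x).le⟩
  obtain ⟨_, ⟨w, hw, rfl⟩, hdom⟩ := horbit.exists_mem_forall_inner_coroot_nonneg hd
    ⟨x, 1, one_mem _, rfl⟩ (by
      rintro _ ⟨w, hw, rfl⟩ i -
      exact ⟨_, mul_mem (reflection_mem_weylGroup (hΔ i)) hw, rfl⟩)
  exact ⟨w, hw, hdom⟩

variable {T : AddSubgroup V} {t : ℝ} {v : V}

theorem exists_isMinOn_norm_smul_sub (hT : ∀ R, {x | x ∈ T ∧ ‖x‖ ≤ R}.Finite) (ht : 1 ≤ t) :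
    ∃ μ ∈ T, IsMinOn (fun μ => ‖t • μ - v‖) T μ := by
  obtain ⟨μ, hμ, hmin⟩ := Set.exists_min_image _ (fun μ => ‖t • μ - v‖) (hT (2 * ‖v‖))
    ⟨0, zero_mem T, by simp⟩
  have hμv : ‖t • μ - v‖ ≤ ‖v‖ := by simpa using hmin 0 ⟨zero_mem T, by simp⟩
  refine ⟨μ, hμ.1, isMinOn_iff.mpr fun μ' hμ' => ?_⟩
  by_cases hμ'v : ‖t • μ' - v‖ ≤ ‖v‖
  · exact hmin μ' ⟨hμ', norm_le_two_mul_of_norm_smul_sub_le ht hμ'v⟩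
  · exact hμv.trans (not_le.mp hμ'v).le

theorem exists_isMinOn_norm_smul_sub_forall_inner_coroot_nonneg
    (hd : ∀ i, 0 < ⟪d, coroot (Δ i)⟫) (hT : ∀ R, {x | x ∈ T ∧ ‖x‖ ≤ R}.Finite)
    (hTrefl : ∀ i, ∀ x ∈ T, (ℝ ∙ Δ i)ᗮ.reflection x ∈ T) (ht : 1 ≤ t)
    (hv : ∀ i, 0 ≤ ⟪v, coroot (Δ i)⟫) :
    ∃ μ ∈ T, IsMinOn (fun μ => ‖t • μ - v‖) T μ ∧ ∀ i, 0 ≤ ⟪μ, coroot (Δ i)⟫ := by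
  set S := {μ | μ ∈ T ∧ IsMinOn (fun μ => ‖t • μ - v‖) T μ}
  have hS : S.Finite := (hT (2 * ‖v‖)).subset fun μ ⟨hμ, hmin⟩ =>
    ⟨hμ, norm_le_two_mul_of_norm_smul_sub_le ht (by simpa using isMinOn_iff.mp hmin 0 (zero_mem T))⟩
  obtain ⟨μ, ⟨hμ, hmin⟩, hdom⟩ := hS.exists_mem_forall_inner_coroot_nonneg hd
    (exists_isMinOn_norm_smul_sub hT ht) fun z ⟨hz, hmin⟩ i hneg => by
      refine ⟨hTrefl i z hz, isMinOn_iff.mpr fun μ' hμ' => le_trans ?_ (isMinOn_iff.mp hmin μ' hμ')⟩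
      exact norm_smul_sub_le_of_inner_le (by linarith) (LinearIsometryEquiv.norm_map _ z)
        (real_inner_le_inner_reflection hneg.le (hv i))
  exact ⟨μ, hμ, hmin, hdom⟩

theorem inner_coroot_le_of_isMinOn {θ μ : V} {w : V ≃ₗᵢ[ℝ] V} (hθ : w.symm θ ∈ T) (hμ : μ ∈ T)
    (ht : 0 < t) (hmin : IsMinOn (fun μ => ‖t • μ - v‖) T μ) :
    ⟪w (t • μ - v), coroot θ⟫ ≤ t := by
  by_contra! h
  have hlt := norm_sub_smul_lt_of_lt_inner_coroot ht h
  have hshift : ‖t • (μ - w.symm θ) - v‖ = ‖w (t • μ - v) - t • θ‖ := by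
    rw [← w.norm_map, smul_sub, sub_right_comm, map_sub, map_smul, w.apply_symm_apply]
  rw [w.norm_map, ← hshift] at hlt
  exact hlt.not_ge (isMinOn_iff.mp hmin _ (sub_mem hμ hθ))

end

theorem exists_translation_weyl_dominant_general
    {V : Type*} [NormedAddCommGroup V] [InnerProductSpace ℝ V]
    (Φ : Set V) (hΦfin : Φ.Finite)
    (hΦspan : Submodule.span ℝ Φ = ⊤)
    (hΦcrys : ∀ α ∈ Φ, ∀ β ∈ Φ, ∃ k : ℤ, 2 * ⟪β, α⟫ / ⟪α, α⟫ = (k : ℝ))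
    (n : ℕ) (Δ : Fin n → V) (hΔΦ : ∀ i, Δ i ∈ Φ)
    (hΔind : LinearIndependent ℝ Δ)
    -- the fundamental Weyl chamber
    (C : Set V) (hC : C = {x | ∀ i, 0 < 2 * ⟪x, Δ i⟫ / ⟪Δ i, Δ i⟫})
    -- the Weyl group, generated by the reflections in the hyperplanes orthogonal to the roots
    (W : Subgroup (V ≃ₗᵢ[ℝ] V))
    (hW : W = Subgroup.closure {g | ∃ α ∈ Φ, g = Submodule.reflection (ℝ ∙ α)ᗮ})
    -- the weight lattice
    (P : Set V) (hP : P = {x | ∀ α ∈ Φ, ∃ k : ℤ, 2 * ⟪x, α⟫ / ⟪α, α⟫ = (k : ℝ)})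
    -- the highest root
    (θ : V) (hθΦ : θ ∈ Φ)
    -- the lattice `M`, generated by the Weyl orbit of `θ`
    (M : AddSubgroup V) (hM : M = AddSubgroup.closure {v | ∃ w ∈ W, v = w θ}) :
    ∀ ℓ : ℕ, 0 < ℓ → ∀ lam ∈ P ∩ closure C,
      ∃ μ, μ ∈ M ∧ μ ∈ closure C ∧ ∃ w ∈ W,
        w ((ℓ : ℝ) • μ - lam) ∈ P ∩ closure C ∧
        2 * ⟪w ((ℓ : ℝ) • μ - lam), θ⟫ / ⟪θ, θ⟫ ≤ (ℓ : ℝ) := by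
  simp only [← real_inner_coroot] at hΦcrys hC hP ⊢
  change W = weylGroup Φ at hW
  change P = weightLattice Φ at hP
  subst hW hP
  change M = orbitLattice (weylGroup Φ) θ at hM
  subst hC hM
  have hcrys : Φ ⊆ weightLattice Φ := fun β hβ α hα => hΦcrys α hα β hβ
  obtain ⟨d, hd⟩ := hΔind.exists_forall_inner_eq_one
  have hd_pos : ∀ i, 0 < ⟪d, coroot (Δ i)⟫ :=
    fun i => real_inner_coroot_pos_iff.mpr (by simp [hd])
  rw [closure_setOf_forall_inner_pos _ hd_pos]
  rintro ℓ hℓ lam ⟨hlamP, hlamC⟩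
  have hMP := orbitLattice_le_weightLattice hcrys hθΦ
  obtain ⟨μ, hμM, hμmin, hμdom⟩ := exists_isMinOn_norm_smul_sub_forall_inner_coroot_nonneg hd_pos
    (fun R => (finite_setOf_mem_weightLattice_norm_le hΦfin hΦspan R).subset
      fun x hx => ⟨hMP hx.1, hx.2⟩)
    (fun i x hx => map_mem_orbitLattice (reflection_mem_weylGroup (hΔΦ i)) hx)
    (t := ℓ) (by exact_mod_cast hℓ) hlamC
  have hx : (ℓ : ℝ) • μ - lam ∈ weightLattice Φ :=
    sub_mem (Nat.cast_smul_eq_nsmul ℝ ℓ μ ▸ nsmul_mem (hMP hμM) ℓ) hlamP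
  obtain ⟨w, hw, hwdom⟩ :=
    exists_mem_weylGroup_forall_inner_coroot_nonneg hΦfin hΦspan hcrys hΔΦ hd_pos hx
  exact ⟨μ, hμM, hμdom, w, hw, ⟨mapsTo_weightLattice_of_mem_weylGroup hcrys hw hx, hwdom⟩,
    inner_coroot_le_of_isMinOn (apply_mem_orbitLattice (inv_mem hw)) hμM (by positivity) hμmin⟩

/-- Euclidean form of Proposition 3.1, case `a₀ = 1`.
Let `Φ` be a finite, reduced, crystallographic root system spanning a finite-dimensional
real inner product space `V`, with base `Δ`, fundamental chamber `C`, Weyl group `W̊`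
(generated by the reflections in the root hyperplanes), weight lattice
`P̊ = {x | ⟨x, α∨⟩ ∈ ℤ for all α ∈ Φ}`, dominant weights `P̊⁺ = P̊ ∩ C̄`, and highest
root `θ`.  Let `M` be the subgroup of `(V, +)` generated by the Weyl orbit of `θ` and
`M⁺ = M ∩ C̄`.  Then for every `ℓ ≥ 1` and every `λ ∈ P̊⁺` there exist `μ ∈ M⁺` and
`w ∈ W̊` such that `w(ℓμ − λ) ∈ P̊⁺` and `⟨w(ℓμ − λ), θ∨⟩ ≤ ℓ`.
Here `⟨x, α∨⟩ = 2⟪x, α⟫/⟪α, α⟫`. -/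
theorem exists_translation_weyl_dominant
    {V : Type*} [NormedAddCommGroup V] [InnerProductSpace ℝ V] [FiniteDimensional ℝ V]
    (Φ : Set V) (hΦfin : Φ.Finite) (hΦ0 : (0 : V) ∉ Φ)
    (hΦspan : Submodule.span ℝ Φ = ⊤)
    (hΦreduced : ∀ α ∈ Φ, ∀ t : ℝ, t • α ∈ Φ → t = 1 ∨ t = -1)
    (hΦrefl : ∀ α ∈ Φ, ∀ β ∈ Φ, β - (2 * ⟪β, α⟫ / ⟪α, α⟫) • α ∈ Φ)
    (hΦcrys : ∀ α ∈ Φ, ∀ β ∈ Φ, ∃ k : ℤ, 2 * ⟪β, α⟫ / ⟪α, α⟫ = (k : ℝ))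
    (n : ℕ) (Δ : Fin n → V) (hΔΦ : ∀ i, Δ i ∈ Φ)
    (hΔind : LinearIndependent ℝ Δ)
    (hΔbase : ∀ β ∈ Φ,
      (∃ c : Fin n → ℤ, (∀ i, 0 ≤ c i) ∧ β = ∑ i, (c i : ℝ) • Δ i) ∨
      (∃ c : Fin n → ℤ, (∀ i, c i ≤ 0) ∧ β = ∑ i, (c i : ℝ) • Δ i))
    -- the fundamental Weyl chamber
    (C : Set V) (hC : C = {x | ∀ i, 0 < 2 * ⟪x, Δ i⟫ / ⟪Δ i, Δ i⟫})
    -- the Weyl group, generated by the reflections in the hyperplanes orthogonal to the roots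
    (W : Subgroup (V ≃ₗᵢ[ℝ] V))
    (hW : W = Subgroup.closure {g | ∃ α ∈ Φ, g = Submodule.reflection (ℝ ∙ α)ᗮ})
    -- the weight lattice
    (P : Set V) (hP : P = {x | ∀ α ∈ Φ, ∃ k : ℤ, 2 * ⟪x, α⟫ / ⟪α, α⟫ = (k : ℝ)})
    -- the highest root
    (θ : V) (hθΦ : θ ∈ Φ)
    (hθhigh : ∀ β ∈ Φ, ∃ c : Fin n → ℝ, (∀ i, 0 ≤ c i) ∧ θ - β = ∑ i, c i • Δ i)
    -- the lattice `M`, generated by the Weyl orbit of `θ`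
    (M : AddSubgroup V) (hM : M = AddSubgroup.closure {v | ∃ w ∈ W, v = w θ}) :
    ∀ ℓ : ℕ, 0 < ℓ → ∀ lam ∈ P ∩ closure C,
      ∃ μ, μ ∈ M ∧ μ ∈ closure C ∧ ∃ w ∈ W,
        w ((ℓ : ℝ) • μ - lam) ∈ P ∩ closure C ∧
        2 * ⟪w ((ℓ : ℝ) • μ - lam), θ⟫ / ⟪θ, θ⟫ ≤ (ℓ : ℝ) :=
  exists_translation_weyl_dominant_general Φ hΦfin hΦspan hΦcrys n Δ hΔΦ hΔind C hC W hW P hP θ hθΦ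
    M hM
end

section
/- Let n ≥ 1, let V = ℝⁿ with standard orthonormal basis e₁,…,e_n, and let Φ = {±2e_i : 1 ≤ i ≤ n} ∪ {±e_i ± e_j : 1 ≤ i < j ≤ n} be the root system of type C_n, with base α_i = e_i − e_{i+1} (1 ≤ i ≤ n−1), α_n = 2e_n, Weyl group W̊ (the group of signed permutations of the coordinates), fundamental chamber C = {x ∈ ℝⁿ : x₁ > x₂ > ⋯ > x_n > 0}, weight lattice P̊ = ℤⁿ, P̊⁺ = P̊ ∩ C̄, and highest root θ = 2e₁. Let M = ℤⁿ, the subgroup of ℝⁿ generated by {w(θ/2) : w ∈ W̊}, and M⁺ = M ∩ C̄. Then for every positive integer ℓ and every λ ∈ P̊⁺ there exist μ ∈ M⁺ and w ∈ W̊ such that w(ℓμ − λ) ∈ P̊⁺ and ⟨w(ℓμ − λ), θ∨⟩ ≤ ℓ/2, where θ∨ = e₁. -/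
/-- Euclidean form of Proposition 3.1 for type `A₂ₙ⁽²⁾`, underlying finite
type `Cₙ`.  In `ℝⁿ` with the type `Cₙ` root system, the weight lattice is `P̊ = ℤⁿ`, the
dominant weights `P̊⁺` are the weakly decreasing nonnegative integer vectors, the Weyl
group `W̊` is the group of signed permutations of the coordinates (a signed permutation
`w = (σ, ε)` acts by `(w x)ᵢ = εᵢ · x_{σ⁻¹(i)}`), the highest root is `θ = 2e₁` with
`θ∨ = e₁`, and `M = ℤⁿ` (generated by the `W̊`-orbit of `θ/2 = e₁`) with
`M⁺ = M ∩ C̄ = P̊⁺`.  Then for every `ℓ ≥ 1` and every `λ ∈ P̊⁺` there exist `μ ∈ M⁺` and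
a signed permutation `w ∈ W̊` such that `y := w(ℓμ − λ) ∈ P̊⁺` and
`⟨y, θ∨⟩ = y₁ ≤ ℓ/2`, i.e. `2·y₁ ≤ ℓ`. -/
theorem exists_translation_weyl_dominant_typeC
    (n : ℕ) (hn : 0 < n) (ℓ : ℕ) (hℓ : 0 < ℓ)
    (lam : Fin n → ℤ)
    (hlam_dec : ∀ i j : Fin n, i ≤ j → lam j ≤ lam i)
    (hlam_nonneg : ∀ i : Fin n, 0 ≤ lam i) :
    ∃ μ : Fin n → ℤ,
      -- `μ ∈ M⁺ = ℤⁿ ∩ C̄`: weakly decreasing and nonnegative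
      ((∀ i j : Fin n, i ≤ j → μ j ≤ μ i) ∧ (∀ i : Fin n, 0 ≤ μ i)) ∧
      -- a signed permutation `w = (σ, ε) ∈ W̊`
      ∃ (σ : Equiv.Perm (Fin n)) (ε : Fin n → ℤ),
        (∀ i, ε i = 1 ∨ ε i = -1) ∧
        -- `y = w(ℓμ − λ) ∈ P̊⁺` and `2⟨y, e₁⟩ ≤ ℓ`
        (∀ y : Fin n → ℤ,
          (y = fun i => ε i * ((ℓ : ℤ) * μ (σ⁻¹ i) - lam (σ⁻¹ i))) →
          ((∀ i j : Fin n, i ≤ j → y j ≤ y i) ∧ (∀ i : Fin n, 0 ≤ y i)) ∧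
            2 * y ⟨0, hn⟩ ≤ (ℓ : ℤ)) := by
  set L : ℤ := (ℓ : ℤ) with hLdef
  have hL0 : 0 < L := by rw [hLdef]; exact_mod_cast hℓ
  set μ : Fin n → ℤ := fun i => (lam i + L / 2) / L with hμ
  set r : Fin n → ℤ := fun i => L * μ i - lam i with hrdef
  have hbound : ∀ i, 2 * |r i| ≤ L := by
    intro i
    have hdm := Int.mul_ediv_add_emod (lam i + L / 2) L
    have key : r i = L / 2 - (lam i + L / 2) % L := by
      simp only [hrdef, hμ]; linarith
    have h2 : 0 ≤ (lam i + L / 2) % L := Int.emod_nonneg _ hL0.ne'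
    have h3 : (lam i + L / 2) % L < L := Int.emod_lt_of_pos _ hL0
    rcases abs_cases (r i) with ⟨he, _⟩ | ⟨he, _⟩ <;> omega
  set a : Fin n → ℤ := fun i => |r i| with hadef
  set τ : Equiv.Perm (Fin n) := Tuple.sort a with hτ
  refine ⟨μ, ⟨?_, ?_⟩, Fin.revPerm * τ⁻¹,
    fun j => if 0 ≤ r (τ (Fin.rev j)) then 1 else -1, ?_, ?_⟩
  · intro i j hij
    exact Int.ediv_le_ediv hL0 (by linarith [hlam_dec i j hij])
  · intro i
    exact Int.ediv_nonneg (by have := hlam_nonneg i; omega) hL0.le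
  · intro i
    by_cases h : 0 ≤ r (τ (Fin.rev i)) <;> simp [h]
  · intro y hy
    have hσ : ∀ j : Fin n, (Fin.revPerm * τ⁻¹ : Equiv.Perm (Fin n))⁻¹ j = τ (Fin.rev j) := by
      intro j
      simp [Equiv.Perm.mul_apply]
    have hyval : ∀ j : Fin n, y j = a (τ (Fin.rev j)) := by
      intro j
      rw [hy]
      simp only [hσ j, hadef]
      simp only [hrdef]
      split <;> rename_i h
      · rw [one_mul, abs_of_nonneg h]
      · rw [abs_of_neg (not_le.mp h)]; ring
    have hmono := Tuple.monotone_sort a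
    refine ⟨⟨?_, ?_⟩, ?_⟩
    · intro i j hij
      rw [hyval i, hyval j]
      exact hmono (Fin.rev_le_rev.mpr hij)
    · intro i
      rw [hyval i]
      exact abs_nonneg _
    · rw [hyval ⟨0, hn⟩]
      exact hbound _
end
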